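/- arXiv:2011.10172 — 3 statements merged into one kernel-verified Lean document; each statement's English description precedes it below -/
import Mathlib

section
/- Let n ≥ 2 and let G be a simple graph with 2n vertices having a perfect matching M. Then f(G,M) = n−1 if and only if for every two distinct edges e and e' of M, the subgraph of G induced by the four endpoints of e and e' contains an M-alternating cycle (necessarily a 4-cycle whose edges appear alternately in M and E(G)∖M). -/
open SimpleGraph

/-- `M` is a perfect matching of the simple graph `G`, viewed as a set of edges:
the edges of `M` are pairwise disjoint edges of `G` covering every vertex. -/
def IsPM {V : Type*} (G : SimpleGraph V) (M : Set (Sym2 V)) : Prop :=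
  M ⊆ G.edgeSet ∧
  (∀ e ∈ M, ∀ f ∈ M, e ≠ f → ∀ v : V, v ∈ e → v ∉ f) ∧
  (∀ v : V, ∃ e ∈ M, v ∈ e)

/-- `S` is a forcing set of the perfect matching `M` of `G`:
`S ⊆ M` and `M` is the unique perfect matching of `G` containing `S`. -/
def IsForcingSet {V : Type*} (G : SimpleGraph V) (M S : Set (Sym2 V)) : Prop :=
  S ⊆ M ∧ ∀ M', IsPM G M' → S ⊆ M' → M' = M

/-- The forcing number `f(G,M)`: smallest cardinality of a forcing set of `M`. -/
noncomputable def forcingNum {V : Type*} (G : SimpleGraph V) (M : Set (Sym2 V)) : ℕ :=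
  sInf {k | ∃ S, IsForcingSet G M S ∧ S.ncard = k}

/-- The minimum forcing number `f(G)`. -/
noncomputable def minForcing {V : Type*} (G : SimpleGraph V) : ℕ :=
  sInf {k | ∃ M, IsPM G M ∧ forcingNum G M = k}

/-- The maximum forcing number `F(G)`. -/
noncomputable def maxForcing {V : Type*} (G : SimpleGraph V) : ℕ :=
  sSup {k | ∃ M, IsPM G M ∧ forcingNum G M = k}

/-- Vertex connectivity `κ(G)`: least size of a set of vertices whose deletion
disconnects the graph or leaves at most one vertex. -/
noncomputable def vertexConn {V : Type*} (G : SimpleGraph V) : ℕ :=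
  sInf {k | ∃ X : Set V, X.ncard = k ∧ (¬ (G.induce Xᶜ).Connected ∨ Xᶜ.ncard ≤ 1)}

/-- Edge connectivity `λ(G)`: least size of a set of edges whose deletion
disconnects the graph. -/
noncomputable def edgeConn {V : Type*} (G : SimpleGraph V) : ℕ :=
  sInf {k | ∃ F : Set (Sym2 V), F ⊆ G.edgeSet ∧ F.ncard = k ∧ ¬ (G.deleteEdges F).Connected}

/-- `G` is `l`-extendable: `G` is connected, has at least `2l+2` vertices, has a
perfect matching, and every matching of size `l` extends to a perfect matching. -/
def IsExtendable {V : Type*} [Fintype V] (G : SimpleGraph V) (l : ℕ) : Prop :=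
  G.Connected ∧ 2 * l + 2 ≤ Fintype.card V ∧ (∃ M, IsPM G M) ∧
    ∀ N : Set (Sym2 V), N ⊆ G.edgeSet →
      (∀ e ∈ N, ∀ f ∈ N, e ≠ f → ∀ v : V, v ∈ e → v ∉ f) → N.ncard = l →
      ∃ M, IsPM G M ∧ N ⊆ M

/-- `G` is factor-critical: deleting any vertex leaves a graph with a perfect matching. -/
def IsFactorCritical {V : Type*} (G : SimpleGraph V) : Prop :=
  ∀ v : V, ∃ M, IsPM (G.induce {v}ᶜ) M

/-- `o(G)`: the number of connected components of odd order. -/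
noncomputable def oddComponents {V : Type*} (G : SimpleGraph V) : ℕ :=
  {c : G.ConnectedComponent | Odd c.supp.ncard}.ncard

/-- `G` belongs to `𝒦_{n,n}⁺`: it is obtained from `K_{n,n}` by adding edges inside one
partite set; equivalently there is an independent set `A` of size `n` all of whose
vertices are adjacent to all vertices outside `A`. -/
def InKnnPlus {V : Type*} (n : ℕ) (G : SimpleGraph V) : Prop :=
  ∃ A : Set V, A.ncard = n ∧ (∀ a ∈ A, ∀ b ∈ A, ¬ G.Adj a b) ∧
    ∀ a ∈ A, ∀ b ∉ A, G.Adj a b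

/-- `M` is a perfect matching of the subgraph of `G` induced by the vertex set `T`. -/
def IsPMOn {V : Type*} (G : SimpleGraph V) (T : Set V) (M : Set (Sym2 V)) : Prop :=
  M ⊆ G.edgeSet ∧ (∀ e ∈ M, ∀ w : V, w ∈ e → w ∈ T) ∧
  (∀ e ∈ M, ∀ f ∈ M, e ≠ f → ∀ v : V, v ∈ e → v ∉ f) ∧
  (∀ w ∈ T, ∃ e ∈ M, w ∈ e)

/-- The forcing number of the perfect matching `M` of the subgraph of `G`
induced by the vertex set `T`. -/
noncomputable def forcingNumOn {V : Type*} (G : SimpleGraph V) (T : Set V)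
    (M : Set (Sym2 V)) : ℕ :=
  sInf {k | ∃ S, S ⊆ M ∧ (∀ M', IsPMOn G T M' → S ⊆ M' → M' = M) ∧ S.ncard = k}

/-- `{i,j}` is one of the `k` special pairs `{2t, 2t+1}` (0-indexed), `t < k`. -/
def pairIdx (k : ℕ) {n : ℕ} (i j : Fin n) : Prop :=
  ∃ t, t < k ∧ ((i.val = 2 * t ∧ j.val = 2 * t + 1) ∨ (j.val = 2 * t ∧ i.val = 2 * t + 1))

/-- The graph `H_k` on vertices `u_0,…,u_{n-1}` (left copy) and `v_0,…,v_{n-1}`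
(right copy): edges `u_i v_i` for all `i`; `u_{2t} u_{2t+1}` and `v_{2t} v_{2t+1}`
for `t < k`; and `u_i v_j`, `u_j v_i` for every pair `i ≠ j` that is not one of the
`k` special pairs. -/
def Hgraph (n k : ℕ) : SimpleGraph (Fin n ⊕ Fin n) :=
  SimpleGraph.fromRel (fun x y =>
    match x, y with
    | Sum.inl i, Sum.inr j => i = j ∨ ¬ pairIdx k i j
    | Sum.inl i, Sum.inl j => pairIdx k i j
    | Sum.inr i, Sum.inr j => pairIdx k i j
    | Sum.inr _, Sum.inl _ => False)

/-- The perfect matching `M₀ = {u_i v_i : i}` of `H_k`. -/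
def M0 (n : ℕ) : Set (Sym2 (Fin n ⊕ Fin n)) :=
  {e | ∃ i : Fin n, e = s(Sum.inl i, Sum.inr i)}

/-!
Deleting any single edge from `M` leaves a forcing set, so `f(G,M) ≤ n - 1`. For two edges
`s(u,v)`, `s(x,y)` of `M`, the set `M \ {s(u,v), s(x,y)}` is forcing exactly when these edges
span no `M`-alternating `4`-cycle: switching `M` along such a cycle gives a second perfect
matching containing it; without one, a perfect matching containing it must match `u, v, x, y`
among themselves, and inside `G` it can only do so by `s(u,v)` and `s(x,y)`.
-/

namespace IsPM

variable {V : Type*} {G : SimpleGraph V} {M M' N N' T : Set (Sym2 V)} {e f : Sym2 V} {a b : V}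

lemma eq_of_mem (hM : IsPM G M) (he : e ∈ M) (hf : f ∈ M) (hae : a ∈ e) (haf : a ∈ f) :
    e = f :=
  by_contra fun hne => hM.2.1 e he f hf hne a hae haf

lemma ne_of_mem (hM : IsPM G M) (h : s(a, b) ∈ M) : a ≠ b :=
  G.ne_of_adj (hM.1 h)

lemma exists_mem (hM : IsPM G M) (a : V) : ∃ b, s(a, b) ∈ M := by
  obtain ⟨e, he, hae⟩ := hM.2.2 a
  obtain ⟨b, rfl⟩ := Sym2.mem_iff_exists.mp hae
  exact ⟨b, he⟩

lemma eq_of_subset (hM : IsPM G M) (hM' : IsPM G M') (h : M ⊆ M') : M' = M := by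
  refine Set.Subset.antisymm ?_ h
  intro f hf
  obtain ⟨a, b⟩ := f
  obtain ⟨e, he, hae⟩ := hM.2.2 a
  rwa [← hM'.eq_of_mem (h he) hf hae (Sym2.mem_mk_left a b)]

lemma two_mul_ncard [Fintype V] (hM : IsPM G M) : 2 * M.ncard = Fintype.card V := by
  classical
  have hfin := M.toFinite
  have hcover : hfin.toFinset.biUnion Sym2.toFinset = Finset.univ := by
    ext w
    simpa using hM.2.2 w
  have hdisj : (hfin.toFinset : Set (Sym2 V)).PairwiseDisjoint Sym2.toFinset := by
    intro e he f hf hne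
    simp only [Set.Finite.coe_toFinset] at he hf
    exact Finset.disjoint_left.mpr fun a hae haf =>
      hne (hM.eq_of_mem he hf (by simpa using hae) (by simpa using haf))
  rw [← Finset.card_univ, ← hcover, Finset.card_biUnion hdisj,
    Finset.sum_congr rfl fun e he =>
      Sym2.card_toFinset_of_not_isDiag e (G.not_isDiag_of_mem_edgeSet (hM.1 (by simpa using he))),
    Finset.sum_const, smul_eq_mul, Set.ncard_eq_toFinset_card M hfin, mul_comm]

lemma sdiff_union (hM : IsPM G M) (hN : N ⊆ M) (hN'G : N' ⊆ G.edgeSet)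
    (hN' : ∀ e ∈ N', ∀ f ∈ N', e ≠ f → ∀ v : V, v ∈ e → v ∉ f)
    (hcov : ∀ w, (∃ e ∈ N, w ∈ e) ↔ ∃ e ∈ N', w ∈ e) :
    IsPM G (M \ N ∪ N') := by
  have hold : ∀ e ∈ M \ N, ∀ f ∈ N', ∀ w, w ∈ e → w ∉ f := by
    intro e he f hf w hwe hwf
    obtain ⟨g, hg, hwg⟩ := (hcov w).mpr ⟨f, hf, hwf⟩
    exact he.2 (hM.eq_of_mem he.1 (hN hg) hwe hwg ▸ hg)
  refine ⟨Set.union_subset (Set.sdiff_subset.trans hM.1) hN'G, ?_, fun w => ?_⟩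
  · rintro e (he | he) f (hf | hf) hne w hwe hwf
    · exact hM.2.1 e he.1 f hf.1 hne w hwe hwf
    · exact hold e he f hf w hwe hwf
    · exact hold f hf e he w hwf hwe
    · exact hN' e he f hf hne w hwe hwf
  · obtain ⟨e, he, hwe⟩ := hM.2.2 w
    by_cases heN : e ∈ N
    · obtain ⟨f, hf, hwf⟩ := (hcov w).mp ⟨e, heN, hwe⟩
      exact ⟨f, Or.inr hf, hwf⟩
    · exact ⟨e, Or.inl ⟨he, heN⟩, hwe⟩

lemma exists_mem_of_sdiff_subset (hM : IsPM G M) (hM' : IsPM G M') (hsub : M \ T ⊆ M')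
    (hab : s(a, b) ∈ M') (hf : f ∈ M) (hfT : f ∈ T) (ha : a ∈ f) : ∃ g ∈ T, b ∈ g := by
  obtain ⟨g, hg, hbg⟩ := hM.2.2 b
  by_cases hgT : g ∈ T
  · exact ⟨g, hgT, hbg⟩
  · have hag : a ∈ g :=
      hM'.eq_of_mem hab (hsub ⟨hg, hgT⟩) (Sym2.mem_mk_right a b) hbg ▸ Sym2.mem_mk_left a b
    exact absurd (hM.eq_of_mem hf hg ha hag ▸ hfT) hgT

end IsPM

section AlternatingSquare

variable {V : Type*} {G : SimpleGraph V} {M S : Set (Sym2 V)} {u v x y : V}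

/-- Together with the matching edges `s(u, v)` and `s(x, y)`, two edges of `G` close an
alternating `4`-cycle. -/
def IsAlternatingSquare (G : SimpleGraph V) (u v x y : V) : Prop :=
  (G.Adj u x ∧ G.Adj v y) ∨ (G.Adj u y ∧ G.Adj v x)

lemma isAlternatingSquare_comm :
    IsAlternatingSquare G u v x y ↔ IsAlternatingSquare G x y u v := by
  unfold IsAlternatingSquare
  rw [G.adj_comm x u, G.adj_comm y v, G.adj_comm x v, G.adj_comm y u]
  tauto

lemma IsPM.ne_of_mem_of_mem (hM : IsPM G M) (he : s(u, v) ∈ M) (he' : s(x, y) ∈ M)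
    (hne : s(u, v) ≠ s(x, y)) : u ≠ x ∧ u ≠ y ∧ v ≠ x ∧ v ≠ y := by
  have hdisj : ∀ a ∈ s(u, v), a ∉ s(x, y) := fun a ha ha' => hne (hM.eq_of_mem he he' ha ha')
  simp only [Sym2.mem_iff, forall_eq_or_imp, forall_eq, not_or] at hdisj
  tauto

lemma IsPM.switch (hM : IsPM G M) (he : s(u, v) ∈ M) (he' : s(x, y) ∈ M)
    (hne : s(u, v) ≠ s(x, y)) (hux : G.Adj u x) (hvy : G.Adj v y) :
    IsPM G (M \ {s(u, v), s(x, y)} ∪ {s(u, x), s(v, y)}) := by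
  obtain ⟨-, huy, hvx, -⟩ := hM.ne_of_mem_of_mem he he' hne
  have huv := hM.ne_of_mem he
  have hxy := hM.ne_of_mem he'
  refine hM.sdiff_union (Set.pair_subset he he') (Set.pair_subset hux hvy) ?_ fun w => ?_
  · simp only [Set.mem_insert_iff, Set.mem_singleton_iff]
    rintro e (rfl | rfl) f (rfl | rfl) hne w hwe hwf <;>
      simp only [Sym2.mem_iff] at hwe hwf <;> grind
  · simp only [Set.mem_insert_iff, Set.mem_singleton_iff, exists_eq_or_imp, exists_eq_left,
      Sym2.mem_iff]
    tauto

lemma IsForcingSet.mem_or_mem_of_isAlternatingSquare (hS : IsForcingSet G M S)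
    (hM : IsPM G M) (he : s(u, v) ∈ M) (he' : s(x, y) ∈ M) (hne : s(u, v) ≠ s(x, y))
    (halt : IsAlternatingSquare G u v x y) : s(u, v) ∈ S ∨ s(x, y) ∈ S := by
  suffices key : ∀ {x y : V}, s(x, y) ∈ M → s(u, v) ≠ s(x, y) → G.Adj u x → G.Adj v y →
      s(u, v) ∈ S ∨ s(x, y) ∈ S by
    rcases halt with ⟨hux, hvy⟩ | ⟨huy, hvx⟩
    · exact key he' hne hux hvy
    · rw [Sym2.eq_swap (a := x)] at he' hne ⊢
      exact key he' hne huy hvx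
  intro x y he' hne hux hvy
  by_contra! hnot
  have hsub : S ⊆ M \ {s(u, v), s(x, y)} ∪ {s(u, x), s(v, y)} := by
    intro f hf
    refine Or.inl ⟨hS.1 hf, ?_⟩
    rintro (rfl | rfl)
    exacts [hnot.1 hf, hnot.2 hf]
  have hswitch := hS.2 _ (hM.switch he he' hne hux hvy) hsub
  have hux_mem : s(u, x) ∈ M := hswitch ▸ Or.inr (Set.mem_insert _ _)
  have hvx : v ≠ x := (hM.ne_of_mem_of_mem he he' hne).2.2.1
  exact hvx (Sym2.congr_right.mp (hM.eq_of_mem he hux_mem (Sym2.mem_mk_left u v)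
    (Sym2.mem_mk_left u x)))

end AlternatingSquare

section SdiffPair

variable {V : Type*} {G : SimpleGraph V} {M M' : Set (Sym2 V)} {u v w x y : V}

lemma IsPM.eq_or_eq_or_eq_of_sdiff_pair_subset (hM : IsPM G M) (hM' : IsPM G M')
    (he : s(u, v) ∈ M) (hsub : M \ {s(u, v), s(x, y)} ⊆ M') (huw : s(u, w) ∈ M') :
    w = v ∨ w = x ∨ w = y := by
  obtain ⟨g, hg, hwg⟩ :=
    hM.exists_mem_of_sdiff_subset hM' hsub huw he (Set.mem_insert _ _) (Sym2.mem_mk_left u v)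
  have hwu : w ≠ u := (hM'.ne_of_mem huw).symm
  simp only [Set.mem_insert_iff, Set.mem_singleton_iff] at hg
  rcases hg with rfl | rfl <;> simp only [Sym2.mem_iff] at hwg <;> tauto

lemma IsPM.mem_of_mem_of_sdiff_pair_subset (hM : IsPM G M) (hM' : IsPM G M')
    (he : s(u, v) ∈ M) (he' : s(x, y) ∈ M) (hne : s(u, v) ≠ s(x, y))
    (hsub : M \ {s(u, v), s(x, y)} ⊆ M') (hux : s(u, x) ∈ M') : s(v, y) ∈ M' := by
  obtain ⟨-, -, hvx, -⟩ := hM.ne_of_mem_of_mem he he' hne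
  have huv := hM.ne_of_mem he
  obtain ⟨w, hvw⟩ := hM'.exists_mem v
  rw [Sym2.eq_swap (a := u)] at he hsub
  rcases hM.eq_or_eq_or_eq_of_sdiff_pair_subset hM' he hsub hvw with h | h | h <;>
    rw [h] at hvw
  · have hsame := hM'.eq_of_mem hvw hux (Sym2.mem_mk_right v u) (Sym2.mem_mk_left u x)
    simp only [Sym2.eq_iff] at hsame
    tauto
  · exact absurd (Sym2.congr_left.mp (hM'.eq_of_mem hvw hux (Sym2.mem_mk_right v x)
      (Sym2.mem_mk_right u x))) huv.symm
  · exact hvw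

lemma IsPM.mem_of_sdiff_pair_subset (hM : IsPM G M) (hM' : IsPM G M')
    (he : s(u, v) ∈ M) (he' : s(x, y) ∈ M) (hne : s(u, v) ≠ s(x, y))
    (hsub : M \ {s(u, v), s(x, y)} ⊆ M') (halt : ¬ IsAlternatingSquare G u v x y) :
    s(u, v) ∈ M' := by
  obtain ⟨w, huw⟩ := hM'.exists_mem u
  rcases hM.eq_or_eq_or_eq_of_sdiff_pair_subset hM' he hsub huw with h | h | h <;>
    rw [h] at huw
  · exact huw
  · have hvy := hM.mem_of_mem_of_sdiff_pair_subset hM' he he' hne hsub huw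
    exact absurd (Or.inl ⟨hM'.1 huw, hM'.1 hvy⟩) halt
  · rw [Sym2.eq_swap (a := x)] at he' hne hsub
    have hvx := hM.mem_of_mem_of_sdiff_pair_subset hM' he he' hne hsub huw
    exact absurd (Or.inr ⟨hM'.1 huw, hM'.1 hvx⟩) halt

lemma IsPM.isForcingSet_sdiff_pair (hM : IsPM G M) (he : s(u, v) ∈ M) (he' : s(x, y) ∈ M)
    (hne : s(u, v) ≠ s(x, y)) (halt : ¬ IsAlternatingSquare G u v x y) :
    IsForcingSet G M (M \ {s(u, v), s(x, y)}) := by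
  refine ⟨Set.sdiff_subset, fun M' hM' hsub => hM.eq_of_subset hM' fun f hf => ?_⟩
  by_cases hfT : f ∈ ({s(u, v), s(x, y)} : Set (Sym2 V))
  · rcases hfT with rfl | rfl
    · exact hM.mem_of_sdiff_pair_subset hM' he he' hne hsub halt
    · rw [Set.pair_comm] at hsub
      exact hM.mem_of_sdiff_pair_subset hM' he' he hne.symm hsub
        (isAlternatingSquare_comm.not.mp halt)
  · exact hsub ⟨hf, hfT⟩

end SdiffPair

section ForcingNumber

variable {V : Type*} {G : SimpleGraph V} {M S : Set (Sym2 V)} {e : Sym2 V} {k : ℕ}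

lemma IsForcingSet.forcingNum_le (hS : IsForcingSet G M S) : forcingNum G M ≤ S.ncard :=
  Nat.sInf_le ⟨S, hS, rfl⟩

lemma IsPM.isForcingSet_self (hM : IsPM G M) : IsForcingSet G M M :=
  ⟨subset_rfl, fun _ hM' h => hM.eq_of_subset hM' h⟩

lemma IsPM.le_forcingNum (hM : IsPM G M) (h : ∀ S, IsForcingSet G M S → k ≤ S.ncard) :
    k ≤ forcingNum G M :=
  le_csInf ⟨_, M, hM.isForcingSet_self, rfl⟩ (by rintro _ ⟨S, hS, rfl⟩; exact h S hS)

lemma IsPM.isForcingSet_sdiff_singleton (hM : IsPM G M) (he : e ∈ M) :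
    IsForcingSet G M (M \ {e}) := by
  refine ⟨Set.sdiff_subset, fun M' hM' hsub => hM.eq_of_subset hM' fun f hf => ?_⟩
  by_cases hfe : f = e
  · obtain ⟨u, v⟩ := e
    obtain ⟨w, huw⟩ := hM'.exists_mem u
    obtain ⟨g, rfl, hwg⟩ := hM.exists_mem_of_sdiff_subset hM' hsub huw he rfl
      (Sym2.mem_mk_left u v)
    have hwv : w = v := (Sym2.mem_iff.mp hwg).resolve_left (hM'.ne_of_mem huw).symm
    rwa [hfe, ← hwv]
  · exact hsub ⟨hf, hfe⟩

lemma IsPM.forcingNum_le_ncard_sub_one (hM : IsPM G M) :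
    forcingNum G M ≤ M.ncard - 1 := by
  rcases M.eq_empty_or_nonempty with hempty | ⟨e, he⟩
  · simpa [hempty] using hM.isForcingSet_self.forcingNum_le
  · simpa [Set.ncard_sdiff_singleton_of_mem he] using
      (hM.isForcingSet_sdiff_singleton he).forcingNum_le

lemma IsPM.forcingNum_lt_ncard_sub_one {u v x y : V} (hM : IsPM G M) (hfin : M.Finite)
    (he : s(u, v) ∈ M) (he' : s(x, y) ∈ M) (hne : s(u, v) ≠ s(x, y))
    (halt : ¬ IsAlternatingSquare G u v x y) : forcingNum G M < M.ncard - 1 := by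
  have hpair : ({s(u, v), s(x, y)} : Set (Sym2 V)) ⊆ M := Set.pair_subset he he'
  have htwo : 2 ≤ M.ncard := Set.ncard_pair hne ▸ Set.ncard_le_ncard hpair hfin
  have hle := (hM.isForcingSet_sdiff_pair he he' hne halt).forcingNum_le
  rw [Set.ncard_sdiff hpair, Set.ncard_pair hne] at hle
  omega

lemma IsPM.ncard_sub_one_le_forcingNum (hM : IsPM G M) (hfin : M.Finite)
    (halt : ∀ u v x y : V, s(u, v) ∈ M → s(x, y) ∈ M → s(u, v) ≠ s(x, y) →
      IsAlternatingSquare G u v x y) :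
    M.ncard - 1 ≤ forcingNum G M := by
  refine hM.le_forcingNum fun S hS => ?_
  have hfree : (M \ S).ncard ≤ 1 := by
    refine (Set.ncard_le_one hfin.sdiff).mpr ?_
    rintro ⟨u, v⟩ ⟨he, heS⟩ ⟨x, y⟩ ⟨he', he'S⟩
    by_contra hne
    have := hS.mem_or_mem_of_isAlternatingSquare hM he he' hne (halt u v x y he he' hne)
    tauto
  rw [Set.ncard_sdiff' hS.1 hfin] at hfree
  omega

theorem IsPM.forcingNum_eq_ncard_sub_one_iff (hM : IsPM G M) (hfin : M.Finite) :
    forcingNum G M = M.ncard - 1 ↔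
      ∀ u v x y : V, s(u, v) ∈ M → s(x, y) ∈ M → s(u, v) ≠ s(x, y) →
        IsAlternatingSquare G u v x y := by
  refine ⟨fun h u v x y he he' hne => ?_, fun halt =>
    hM.forcingNum_le_ncard_sub_one.antisymm (hM.ncard_sub_one_le_forcingNum hfin halt)⟩
  by_contra halt
  exact (hM.forcingNum_lt_ncard_sub_one hfin he he' hne halt).ne h

end ForcingNumber

theorem stmt0_general {V : Type*} [Fintype V] (n : ℕ)
    (G : SimpleGraph V) (hcard : Fintype.card V = 2 * n)
    (M : Set (Sym2 V)) (hM : IsPM G M) :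
    forcingNum G M = n - 1 ↔
      ∀ u v x y : V, s(u, v) ∈ M → s(x, y) ∈ M → s(u, v) ≠ s(x, y) →
        ((G.Adj u x ∧ G.Adj v y) ∨ (G.Adj u y ∧ G.Adj v x)) := by
  have hn : M.ncard = n := by
    have := hM.two_mul_ncard
    omega
  rw [← hn]
  exact hM.forcingNum_eq_ncard_sub_one_iff M.toFinite

/-- Lemma 2.2, part 1. -/
theorem stmt0 {V : Type*} [Fintype V] (n : ℕ) (hn : 2 ≤ n)
    (G : SimpleGraph V) (hcard : Fintype.card V = 2 * n)
    (M : Set (Sym2 V)) (hM : IsPM G M) :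
    forcingNum G M = n - 1 ↔
      ∀ u v x y : V, s(u, v) ∈ M → s(x, y) ∈ M → s(u, v) ≠ s(x, y) →
        ((G.Adj u x ∧ G.Adj v y) ∨ (G.Adj u y ∧ G.Adj v x)) :=
  stmt0_general n G hcard M hM
end

section
/- Let n ≥ 2 and let G ∈ 𝒢_{2n} satisfy F(G) = n−1. Then G is n-connected; that is, the vertex connectivity κ(G) is at least n (for every set X of fewer than n vertices, the graph G−X is connected). -/
open SimpleGraph

private lemma isPM_subset_eq {V : Type*} {G : SimpleGraph V} {M M' : Set (Sym2 V)}
    (hM : IsPM G M) (hM' : IsPM G M') (hsub : M ⊆ M') : M' = M := by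
  obtain ⟨-, hpd', -⟩ := hM'
  ext g
  refine ⟨fun hg => ?_, fun hg => hsub hg⟩
  obtain ⟨x, hx⟩ : ∃ x, x ∈ g := ⟨(Quot.out g).1, Sym2.out_fst_mem g⟩
  obtain ⟨h, hh, hxh⟩ := hM.2.2 x
  by_cases hgh : g = h
  · exact hgh ▸ hh
  · exact absurd hxh (hpd' g hg h (hsub hh) hgh x hx)

private lemma isPM_ncard {V : Type*} [Fintype V] {G : SimpleGraph V} {M : Set (Sym2 V)}
    (h : IsPM G M) : 2 * M.ncard = Fintype.card V := by
  classical
  obtain ⟨hE, hpd, hcov⟩ := h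
  have hfin : M.Finite := Set.toFinite M
  set Mf : Finset (Sym2 V) := hfin.toFinset with hMf
  have hmem : ∀ e, e ∈ Mf ↔ e ∈ M := fun e => Set.Finite.mem_toFinset hfin
  set g : V → Sym2 V := fun v => (hcov v).choose with hg
  have hg1 : ∀ v, g v ∈ M := fun v => (hcov v).choose_spec.1
  have hg2 : ∀ v, v ∈ g v := fun v => (hcov v).choose_spec.2
  have hfib : ∀ e ∈ M, ∀ v : V, g v = e ↔ v ∈ e := by
    intro e he v
    constructor
    · rintro rfl; exact hg2 v
    · intro hv
      by_contra hne
      exact hpd e he (g v) (hg1 v) (fun hh => hne hh.symm) v hv (hg2 v)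
  have hcards : (Finset.univ : Finset V).card
      = ∑ e ∈ Mf, (Finset.univ.filter (fun v => g v = e)).card := by
    refine Finset.card_eq_sum_card_fiberwise ?_
    intro v _
    exact (hmem _).mpr (hg1 v)
  have hfib2 : ∀ e ∈ Mf, (Finset.univ.filter (fun v => g v = e)).card = 2 := by
    intro e he
    have heM : e ∈ M := (hmem e).mp he
    obtain ⟨x, hx⟩ : ∃ x, x ∈ e := ⟨(Quot.out e).1, Sym2.out_fst_mem e⟩
    obtain ⟨o, rfl⟩ : ∃ o, e = s(x, o) := ⟨Sym2.Mem.other hx, (Sym2.other_spec hx).symm⟩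
    have hxo : x ≠ o := by
      intro hxe
      exact G.not_isDiag_of_mem_edgeSet (hE heM)
        (by rw [hxe]; exact Sym2.mk_isDiag_iff.mpr rfl)
    have hfs : Finset.univ.filter (fun v => g v = s(x, o)) = {x, o} := by
      ext v
      simp only [Finset.mem_filter, Finset.mem_univ, true_and, Finset.mem_insert,
        Finset.mem_singleton]
      rw [hfib _ heM v, Sym2.mem_iff]
    rw [hfs, Finset.card_insert_of_notMem (by simpa using hxo), Finset.card_singleton]
  have hMcard : M.ncard = Mf.card := Set.ncard_eq_toFinset_card M hfin
  have h2 : Fintype.card V = ∑ _e ∈ Mf, 2 := by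
    rw [← Finset.card_univ, hcards]
    exact Finset.sum_congr rfl hfib2
  rw [hMcard, h2, Finset.sum_const, smul_eq_mul, Nat.mul_comm]

private lemma swap_lemma {V : Type*} {G : SimpleGraph V} {M M' : Set (Sym2 V)}
    (hM : IsPM G M) (hM' : IsPM G M') {a b c d : V}
    (he : s(a,b) ∈ M) (hf : s(c,d) ∈ M) (hef : s(a,b) ≠ s(c,d))
    (hsub : M \ {s(a,b), s(c,d)} ⊆ M') (hne : M' ≠ M) :
    (G.Adj a c ∧ G.Adj b d) ∨ (G.Adj a d ∧ G.Adj b c) := by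
  obtain ⟨hE, hpd, hcov⟩ := hM
  obtain ⟨hE', hpd', hcov'⟩ := hM'
  have hab : a ≠ b := (hE he).ne
  have hcd : c ≠ d := (hE hf).ne
  have haf : ∀ v, v ∈ s(a,b) → v ∉ s(c,d) := hpd _ he _ hf hef
  have hac : a ≠ c := by intro h; exact haf a (by simp) (by simp [h])
  have had : a ≠ d := by intro h; exact haf a (by simp) (by simp [h])
  have hbc : b ≠ c := by intro h; exact haf b (by simp) (by simp [h])
  have hbd : b ≠ d := by intro h; exact haf b (by simp) (by simp [h])
  have hba := hab.symm
  have hdc := hcd.symm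
  have hca := hac.symm
  have hda := had.symm
  have hcb := hbc.symm
  have hdb := hbd.symm
  have share : ∀ g h : Sym2 V, g ∈ M' → h ∈ M' → ∀ v, v ∈ g → v ∈ h → g = h := by
    intro g h hg hh v hvg hvh
    by_contra hne'
    exact hpd' g hg h hh hne' v hvg hvh
  -- vertices of M'-edges outside S lie in {a,b,c,d}
  have key : ∀ g ∈ M', g ∉ M \ {s(a,b), s(c,d)} → ∀ v, v ∈ g →
      v = a ∨ v = b ∨ v = c ∨ v = d := by
    intro g hg hgS v hv
    by_contra hvnot
    push_neg at hvnot
    obtain ⟨hva, hvb, hvc, hvd⟩ := hvnot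
    obtain ⟨h, hh, hvh⟩ := hcov v
    have hhS : h ∈ M \ {s(a,b), s(c,d)} := by
      refine ⟨hh, ?_⟩
      simp only [Set.mem_insert_iff, Set.mem_singleton_iff]
      push_neg
      constructor <;> rintro rfl <;> rw [Sym2.mem_iff] at hvh <;> tauto
    have hgh : g ≠ h := by rintro rfl; exact hgS hhS
    exact hpd' g hg h (hsub hhS) hgh v hv hvh
  have hnotS : ∀ g ∈ M', ∀ w, w ∈ g → (w ∈ s(a,b) ∨ w ∈ s(c,d)) →
      g ∉ M \ {s(a,b), s(c,d)} := by
    rintro g hg w hwg hw ⟨hgM, hgne⟩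
    simp only [Set.mem_insert_iff, Set.mem_singleton_iff] at hgne
    push_neg at hgne
    rcases hw with hw | hw
    · exact hpd g hgM _ he hgne.1 w hwg hw
    · exact hpd g hgM _ hf hgne.2 w hwg hw
  -- the M'-edge at a vertex w ∈ {a,b,c,d} is s(w, x) with x ∈ {a,b,c,d}, x ≠ w
  have hedge : ∀ w : V, (w ∈ s(a,b) ∨ w ∈ s(c,d)) → ∃ x, s(w,x) ∈ M' ∧ w ≠ x ∧
      (x = a ∨ x = b ∨ x = c ∨ x = d) := by
    intro w hw
    obtain ⟨g, hg, hwg⟩ := hcov' w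
    have hgS : g ∉ M \ {s(a,b), s(c,d)} := hnotS g hg w hwg hw
    obtain ⟨o, rfl⟩ : ∃ o, g = s(w, o) := ⟨Sym2.Mem.other hwg, (Sym2.other_spec hwg).symm⟩
    refine ⟨o, hg, ?_, key _ hg hgS o (by simp)⟩
    intro hwe
    exact G.not_isDiag_of_mem_edgeSet (hE' hg)
      (by rw [hwe]; exact Sym2.mk_isDiag_iff.mpr rfl)
  -- e = s(a,b) ∉ M'
  have heM' : s(a,b) ∉ M' := by
    intro heM'
    obtain ⟨x, hx, hcx, hxm⟩ := hedge c (Or.inr (by simp))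
    have hxa : x ≠ a := by
      intro hh
      have := share _ _ hx heM' a (by simp [hh]) (by simp)
      rw [Sym2.eq_iff] at this; tauto
    have hxb : x ≠ b := by
      intro hh
      have := share _ _ hx heM' b (by simp [hh]) (by simp)
      rw [Sym2.eq_iff] at this; tauto
    have hxc : x ≠ c := fun h => hcx h.symm
    have hxd : x = d := by tauto
    rw [hxd] at hx
    have hMM' : M ⊆ M' := by
      intro g hgM
      by_cases h1 : g = s(a,b); · exact h1 ▸ heM'
      by_cases h2 : g = s(c,d); · exact h2 ▸ hx
      exact hsub ⟨hgM, by simp [h1, h2]⟩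
    exact hne (isPM_subset_eq ⟨hE, hpd, hcov⟩ ⟨hE', hpd', hcov'⟩ hMM')
  -- the M'-edge at a
  obtain ⟨x, hx, hax2, hxm⟩ := hedge a (Or.inl (by simp))
  have hxa : x ≠ a := fun h => hax2 h.symm
  have hxb : x ≠ b := by intro hh; rw [hh] at hx; exact heM' hx
  -- the M'-edge at b
  obtain ⟨y, hy, hby2, hym⟩ := hedge b (Or.inl (by simp))
  have hyb : y ≠ b := fun h => hby2 h.symm
  have hya : y ≠ a := by
    intro hh
    have := share _ _ hx hy a (by simp) (by simp [hh])
    rw [Sym2.eq_iff] at this; tauto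
  have hxy : x ≠ y := by
    intro hh
    have := share _ _ hx hy x (by simp) (by simp [hh])
    rw [Sym2.eq_iff] at this; tauto
  rcases hxm with h | h | h | h
  · exact absurd h hxa
  · exact absurd h hxb
  · rw [h] at hx
    have hyc : y ≠ c := fun hh => hxy (h.trans hh.symm)
    have hyd : y = d := by tauto
    rw [hyd] at hy
    exact Or.inl ⟨hE' hx, hE' hy⟩
  · rw [h] at hx
    have hyd : y ≠ d := fun hh => hxy (h.trans hh.symm)
    have hyc : y = c := by tauto
    rw [hyc] at hy
    exact Or.inr ⟨hE' hx, hE' hy⟩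

/-- Lemma 2.3(ii), first part. -/
theorem stmt3 {V : Type*} [Fintype V] (n : ℕ) (hn : 2 ≤ n)
    (G : SimpleGraph V) (hcard : Fintype.card V = 2 * n)
    (hPM : ∃ M, IsPM G M) (hF : maxForcing G = n - 1) :
    n ≤ vertexConn G ∧
      ∀ X : Set V, X.ncard < n → (G.induce Xᶜ).Connected := by
  classical
  have hVne : Nonempty V := by
    rw [← Fintype.card_pos_iff]; omega
  -- obtain a perfect matching M with forcing number n - 1
  have hbdd : BddAbove {k | ∃ M, IsPM G M ∧ forcingNum G M = k} := by
    refine ⟨n, ?_⟩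
    rintro k ⟨M, hM, rfl⟩
    have hMn : M.ncard = n := by have := isPM_ncard hM; omega
    have hforce : IsForcingSet G M M :=
      ⟨subset_rfl, fun M' hM' hsub => isPM_subset_eq hM hM' hsub⟩
    exact Nat.sInf_le ⟨M, hforce, hMn⟩
  have hmemS : n - 1 ∈ {k | ∃ M, IsPM G M ∧ forcingNum G M = k} := by
    rw [← hF]
    exact Nat.sSup_mem (by obtain ⟨M, hM⟩ := hPM; exact ⟨_, M, hM, rfl⟩) hbdd
  obtain ⟨M, hM, hfn⟩ := hmemS
  have hMn : M.ncard = n := by have := isPM_ncard hM; omega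
  have hMfin : M.Finite := Set.toFinite M
  -- every deletion of two matching edges can be rematched differently
  have hswap : ∀ e ∈ M, ∀ f ∈ M, e ≠ f →
      ∃ M', IsPM G M' ∧ M \ {e, f} ⊆ M' ∧ M' ≠ M := by
    intro e he f hf hef
    by_contra hcon
    push_neg at hcon
    have hforce : IsForcingSet G M (M \ {e, f}) :=
      ⟨Set.diff_subset, fun M' hM' hsub => hcon M' hM' hsub⟩
    have hsub2 : {e, f} ⊆ M := by
      rintro g hg
      rcases hg with rfl | rfl
      · exact he
      · exact hf
    have hcard2 : (M \ {e, f}).ncard = n - 2 := by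
      rw [Set.ncard_diff hsub2 (Set.toFinite _), Set.ncard_pair hef, hMn]
    have hle : forcingNum G M ≤ n - 2 := Nat.sInf_le ⟨_, hforce, hcard2⟩
    omega
  -- the main connectivity claim
  have main : ∀ X : Set V, X.ncard < n → (G.induce Xᶜ).Connected := by
    intro X hX
    -- find an edge of M avoiding X
    have hexy : ∃ a b, s(a, b) ∈ M ∧ a ∉ X ∧ b ∉ X ∧ a ≠ b := by
      by_contra hcon
      push_neg at hcon
      have hmeet : ∀ e, e ∈ M → ∃ v, v ∈ X ∧ v ∈ e := by
        intro e he
        obtain ⟨x, hx⟩ : ∃ x, x ∈ e := ⟨(Quot.out e).1, Sym2.out_fst_mem e⟩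
        obtain ⟨o, ho⟩ : ∃ o, e = s(x, o) := ⟨Sym2.Mem.other hx, (Sym2.other_spec hx).symm⟩
        by_contra hno
        push_neg at hno
        have hxo : x ≠ o := fun hh => G.not_isDiag_of_mem_edgeSet (hM.1 he)
          (by rw [ho, hh]; exact Sym2.mk_isDiag_iff.mpr rfl)
        have hxX : x ∉ X := fun h => hno x h hx
        have hoX : o ∉ X := fun h => hno o h (by rw [ho]; simp)
        exact hxo (hcon x o (ho ▸ he) hxX hoX)
      set f : Sym2 V → V := fun e =>
        if h : ∃ v, v ∈ X ∧ v ∈ e then h.choose else Classical.arbitrary V with hfdef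
      have hf1 : ∀ e ∈ M, f e ∈ X ∧ f e ∈ e := by
        intro e he
        have h := hmeet e he
        simp only [hfdef, dif_pos h]
        exact h.choose_spec
      have hinj : Set.InjOn f M := by
        intro e1 h1 e2 h2 hfe
        by_contra hne
        exact hM.2.1 e1 h1 e2 h2 hne (f e1) (hf1 e1 h1).2 (hfe ▸ (hf1 e2 h2).2)
      have hle : M.ncard ≤ X.ncard :=
        Set.ncard_le_ncard_of_injOn f (fun e he => (hf1 e he).1) hinj (Set.toFinite X)
      omega
    obtain ⟨a, b, heM, haX, hbX, hab⟩ := hexy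
    have haC : a ∈ Xᶜ := haX
    have hbC : b ∈ Xᶜ := hbX
    have hindadj : ∀ (u w : V) (hu : u ∈ Xᶜ) (hw : w ∈ Xᶜ), G.Adj u w →
        (G.induce Xᶜ).Adj ⟨u, hu⟩ ⟨w, hw⟩ := by
      intro u w hu hw h
      simpa using h
    have hadj_ab : (G.induce Xᶜ).Adj ⟨a, haC⟩ ⟨b, hbC⟩ :=
      hindadj a b haC hbC (hM.1 heM)
    rw [connected_iff]
    refine ⟨?_, ⟨⟨a, haC⟩⟩⟩
    have hreach : ∀ z (hz : z ∈ Xᶜ), (G.induce Xᶜ).Reachable ⟨z, hz⟩ ⟨a, haC⟩ := by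
      intro z hz
      by_cases hza : z = a
      · subst hza; exact Reachable.refl _
      by_cases hzb : z = b
      · subst hzb; exact hadj_ab.symm.reachable
      obtain ⟨g, hgM, hzg⟩ := hM.2.2 z
      obtain ⟨o, ho⟩ : ∃ o, g = s(z, o) := ⟨Sym2.Mem.other hzg, (Sym2.other_spec hzg).symm⟩
      rw [ho] at hgM
      have hfe : s(a, b) ≠ s(z, o) := by
        intro hh
        rw [Sym2.eq_iff] at hh
        rcases hh with ⟨h1, _⟩ | ⟨_, h2⟩
        · exact hza h1.symm
        · exact hzb h2.symm
      obtain ⟨M', hM', hsub, hne⟩ := hswap _ heM _ hgM hfe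
      rcases swap_lemma hM hM' heM hgM hfe hsub hne with ⟨h1, -⟩ | ⟨-, h2⟩
      · exact (hindadj z a hz haC h1.symm).reachable
      · exact ((hindadj z b hz hbC h2.symm).reachable).trans hadj_ab.symm.reachable
    rintro ⟨zu, hzu⟩ ⟨zw, hzw⟩
    exact (hreach zu hzu).trans (hreach zw hzw).symm
  refine ⟨?_, main⟩
  refine le_csInf ⟨(Set.univ : Set V).ncard, Set.univ, rfl, Or.inr (by simp)⟩ ?_
  rintro k ⟨X, rfl, hdis | hsmall⟩
  · by_contra h
    push_neg at h
    exact hdis (main X h)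
  · have hsum : X.ncard + Xᶜ.ncard = Nat.card V := Set.ncard_add_ncard_compl X
    rw [Nat.card_eq_fintype_card, hcard] at hsum
    omega
end

section
/- Let G ∈ 𝒢_{2n} satisfy F(G) = n−1. Then G belongs to 𝒦_{n,n}^+ if and only if G contains an independent set of size n. -/
open SimpleGraph

lemma pm_struct {V : Type*} (G : SimpleGraph V) (M : Set (Sym2 V)) (hM : IsPM G M) :
    ∃ p : V → V, (∀ v, s(v, p v) ∈ M) ∧ (∀ v, G.Adj v (p v)) ∧
      (∀ v, ∀ e ∈ M, v ∈ e → e = s(v, p v)) ∧ (∀ v, p (p v) = v) := by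
  choose e he hv using hM.2.2
  set p : V → V := fun v => Sym2.Mem.other (hv v) with hp
  have hs : ∀ v, s(v, p v) = e v := fun v => Sym2.other_spec (hv v)
  have hmem : ∀ v, s(v, p v) ∈ M := fun v => (hs v) ▸ he v
  have hadj : ∀ v, G.Adj v (p v) := by
    intro v
    have := hM.1 (hmem v)
    rwa [SimpleGraph.mem_edgeSet] at this
  have huniq : ∀ v, ∀ f ∈ M, v ∈ f → f = s(v, p v) := by
    intro v f hf hvf
    by_contra hne
    have : f ≠ e v := hs v ▸ hne
    exact hM.2.1 f hf (e v) (he v) this v hvf (hv v)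
  refine ⟨p, hmem, hadj, huniq, ?_⟩
  intro v
  have h1 : p v ∈ s(v, p v) := Sym2.mem_mk_right _ _
  have h2 : s(v, p v) = s(p v, p (p v)) := huniq (p v) _ (hmem v) h1
  rw [Sym2.eq_iff] at h2
  rcases h2 with ⟨h3, h4⟩ | ⟨h3, h4⟩
  · exact absurd h3 (hadj v).ne
  · exact h3.symm

/-- Lemma 2.5, first part. -/
theorem stmt5 {V : Type*} [Fintype V] (n : ℕ)
    (G : SimpleGraph V) (hcard : Fintype.card V = 2 * n)
    (hPM : ∃ M, IsPM G M) (hF : maxForcing G = n - 1) :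
    InKnnPlus n G ↔
      ∃ A : Set V, A.ncard = n ∧ ∀ a ∈ A, ∀ b ∈ A, ¬ G.Adj a b := by
  constructor
  · rintro ⟨A, h1, h2, _⟩; exact ⟨A, h1, h2⟩
  rintro ⟨A, hA, hInd⟩
  refine ⟨A, hA, hInd, ?_⟩
  intro a ha b hb
  have hn1 : 1 ≤ n := by
    have : 0 < A.ncard := (Set.ncard_pos (Set.toFinite A)).mpr ⟨a, ha⟩
    omega
  have hcompl : Aᶜ.ncard = n := by
    have h1 := Set.ncard_add_ncard_compl A
    rw [Nat.card_eq_fintype_card, hcard] at h1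
    omega
  by_cases hn2 : 2 ≤ n
  · -- main case: extract M with forcingNum G M = n - 1
    obtain ⟨M, hM, hfM⟩ : ∃ M, IsPM G M ∧ forcingNum G M = n - 1 := by
      obtain ⟨M₀, hM₀⟩ := hPM
      have hTne : {k | ∃ M, IsPM G M ∧ forcingNum G M = k}.Nonempty :=
        ⟨forcingNum G M₀, M₀, hM₀, rfl⟩
      by_cases hbdd : BddAbove {k | ∃ M, IsPM G M ∧ forcingNum G M = k}
      · have h := Nat.sSup_mem hTne hbdd
        rw [show sSup {k | ∃ M, IsPM G M ∧ forcingNum G M = k} = maxForcing G from rfl,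
          hF] at h
        exact h
      · exfalso
        unfold maxForcing at hF
        rw [csSup_of_not_bddAbove hbdd, csSup_empty] at hF
        simp at hF
        omega
    obtain ⟨p, hmem, hadj, huniq, hinv⟩ := pm_struct G M hM
    have hpinj : Function.Injective p := by
      intro x y h
      have := congrArg p h
      rwa [hinv, hinv] at this
    have hpA : ∀ x ∈ A, p x ∉ A := fun x hx h => hInd x hx (p x) h (hadj x)
    have himg : p '' A = Aᶜ := by
      apply Set.eq_of_subset_of_ncard_le
      · rintro _ ⟨x, hx, rfl⟩; exact hpA x hx
      · rw [Set.ncard_image_of_injective _ hpinj, hA, hcompl]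
      · exact Set.toFinite _
    have hMeq : M = (fun x => s(x, p x)) '' A := by
      apply Set.Subset.antisymm
      · intro g hg
        induction g using Sym2.ind with
        | _ x y =>
          have hxg : x ∈ s(x, y) := Sym2.mem_mk_left _ _
          have hgx : s(x, y) = s(x, p x) := huniq x _ hg hxg
          by_cases hxA : x ∈ A
          · exact ⟨x, hxA, hgx.symm⟩
          · have : x ∈ p '' A := himg.symm ▸ hxA
            obtain ⟨c, hc, rfl⟩ := this
            refine ⟨c, hc, ?_⟩
            rw [hgx, hinv, Sym2.eq_swap]
      · rintro _ ⟨x, hx, rfl⟩; exact hmem x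
    have hMcard : M.ncard = n := by
      rw [hMeq, Set.ncard_image_of_injOn, hA]
      intro x hx y hy h
      simp only [Sym2.eq_iff] at h
      rcases h with ⟨h1, _⟩ | ⟨h1, _⟩
      · exact h1
      · exact absurd (h1 ▸ hpA y hy) (fun hk => hk hx)
    -- b = p a₀ for some a₀ ∈ A
    obtain ⟨a₀, ha₀, rfl⟩ : ∃ a₀ ∈ A, p a₀ = b := by
      have : b ∈ p '' A := himg.symm ▸ hb
      obtain ⟨c, hc, hcb⟩ := this
      exact ⟨c, hc, hcb⟩
    by_cases haa : a₀ = a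
    · subst haa; exact hadj a₀
    · by_contra hnadj
      set e := s(a, p a) with he_def
      set f := s(a₀, p a₀) with hf_def
      have hef : e ≠ f := by
        intro h
        rw [he_def, hf_def, Sym2.eq_iff] at h
        rcases h with ⟨h1, _⟩ | ⟨h1, _⟩
        · exact haa h1.symm
        · exact hpA a₀ ha₀ (h1 ▸ ha)
      set S := M \ {e, f} with hS_def
      have hSsub : S ⊆ M := Set.diff_subset
      have heM : e ∈ M := hmem a
      have hfMem : f ∈ M := hmem a₀
      have hforce : ∀ M', IsPM G M' → S ⊆ M' → M' = M := by
        intro M' hM' hSM'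
        obtain ⟨hM'e, hM'd, hM'c⟩ := hM'
        have key : ∀ x : V, (s(x, p x) = e ∨ s(x, p x) = f) → ∀ g ∈ M', x ∈ g →
            ∀ w : V, s(x, w) = g → w = a ∨ w = p a ∨ w = a₀ ∨ w = p a₀ := by
          intro x hx g hg hxg w hw
          by_contra hcon
          push_neg at hcon
          obtain ⟨hw1, hw2, hw3, hw4⟩ := hcon
          obtain ⟨h, hhM, hwh⟩ := hM.2.2 w
          have hwe : w ∉ e := by
            intro hk; rw [he_def, Sym2.mem_iff] at hk; tauto
          have hwf : w ∉ f := by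
            intro hk; rw [hf_def, Sym2.mem_iff] at hk; tauto
          have hhe : h ≠ e := fun hk => hwe (hk ▸ hwh)
          have hhf : h ≠ f := fun hk => hwf (hk ▸ hwh)
          have hhS : h ∈ S := ⟨hhM, by simp [hhe, hhf]⟩
          have hgh : g ≠ h := by
            intro hk
            have hgM : g ∈ M := hk ▸ hhM
            have hgx := huniq x g hgM hxg
            rcases hx with hx | hx
            · exact hhe (by rw [← hk, hgx, hx])
            · exact hhf (by rw [← hk, hgx, hx])
          have hwg : w ∈ g := hw ▸ Sym2.mem_mk_right _ _
          exact hM'd g hg h (hSM' hhS) hgh w hwg hwh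
        have heM' : e ∈ M' := by
          obtain ⟨g, hg, hag⟩ := hM'c a
          have hw : s(a, Sym2.Mem.other hag) = g := Sym2.other_spec hag
          set w := Sym2.Mem.other hag with hwdef
          have hadj' : G.Adj a w := by
            rw [← SimpleGraph.mem_edgeSet, hw]; exact hM'e hg
          rcases key a (Or.inl rfl) g hg hag w hw with h1 | h1 | h1 | h1
          · exact absurd h1.symm hadj'.ne
          · have : e = g := by rw [he_def, ← h1, hw]
            exact this ▸ hg
          · exact absurd (h1 ▸ hadj') (hInd a ha a₀ ha₀)
          · exact absurd (h1 ▸ hadj') hnadj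
        have hfM' : f ∈ M' := by
          obtain ⟨g, hg, hag⟩ := hM'c a₀
          have hw : s(a₀, Sym2.Mem.other hag) = g := Sym2.other_spec hag
          set w := Sym2.Mem.other hag with hwdef
          have hadj' : G.Adj a₀ w := by
            rw [← SimpleGraph.mem_edgeSet, hw]; exact hM'e hg
          rcases key a₀ (Or.inr rfl) g hg hag w hw with h1 | h1 | h1 | h1
          · exact absurd (h1 ▸ hadj') (hInd a₀ ha₀ a ha)
          · exfalso
            have hge : g ≠ e := by
              intro hk
              have : a₀ ∈ e := hk ▸ hag
              rw [he_def, Sym2.mem_iff] at this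
              rcases this with h | h
              · exact haa h
              · exact hpA a ha (h ▸ ha₀)
            have hpae : p a ∈ e := he_def ▸ Sym2.mem_mk_right _ _
            have hpag : p a ∈ g := by
              have : w ∈ g := hw ▸ Sym2.mem_mk_right _ _
              rwa [h1] at this
            exact hM'd g hg e heM' hge (p a) hpag hpae
          · exact absurd h1.symm hadj'.ne
          · have : f = g := by rw [hf_def, ← h1, hw]
            exact this ▸ hg
        apply Set.Subset.antisymm
        · intro g hg
          induction g using Sym2.ind with
          | _ x y =>
            obtain ⟨h, hhM, hxh⟩ := hM.2.2 x
            have hhM' : h ∈ M' := by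
              by_cases h1 : h = e
              · exact h1 ▸ heM'
              by_cases h2 : h = f
              · exact h2 ▸ hfM'
              exact hSM' ⟨hhM, by simp [h1, h2]⟩
            by_cases hgh : s(x, y) = h
            · exact hgh ▸ hhM
            · exact absurd hxh (hM'd _ hg h hhM' hgh x (Sym2.mem_mk_left _ _))
        · intro g hg
          by_cases h1 : g = e
          · exact h1 ▸ heM'
          by_cases h2 : g = f
          · exact h2 ▸ hfM'
          exact hSM' ⟨hg, by simp [h1, h2]⟩
      have hefsub : ({e, f} : Set (Sym2 V)) ⊆ M := by
        intro x hx
        rcases hx with hx | hx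
        · exact hx ▸ heM
        · exact (Set.mem_singleton_iff.mp hx) ▸ hfMem
      have hScard : S.ncard = n - 2 := by
        rw [hS_def, Set.ncard_diff hefsub, hMcard, Set.ncard_pair hef]
      have hle : forcingNum G M ≤ n - 2 :=
        Nat.sInf_le ⟨S, ⟨hSsub, hforce⟩, hScard⟩
      rw [hfM] at hle
      omega
  · -- n = 1
    obtain ⟨M, hM⟩ := hPM
    obtain ⟨p, hmem, hadj, huniq, hinv⟩ := pm_struct G M hM
    have hpa : p a ∉ A := fun h => hInd a ha (p a) h (hadj a)
    have h1c : Aᶜ.ncard = 1 := by rw [hcompl]; omega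
    obtain ⟨x, hx⟩ := Set.ncard_eq_one.mp h1c
    have h1 : b = x := by
      have : b ∈ Aᶜ := hb
      rw [hx] at this; exact this
    have h2 : p a = x := by
      have : p a ∈ Aᶜ := hpa
      rw [hx] at this; exact this
    rw [h1, ← h2]
    exact hadj a
end
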